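/- arXiv:2503.02553 — 2 statements merged into one kernel-verified Lean document; each statement's English description precedes it below -/
import Mathlib

section
/- Let M, N, m be positive integers with m ≥ 2, and let ζ_1, …, ζ_{m−1} ∈ P^-_N(M). If (u_1, …, u_m) and (v_1, …, v_m), with all u_i, v_i ∈ P^+_N(M), are two (possibly identical) solutions of the system, then the Laurent matrix polynomial Σ_{i=1}^{m−1} ~u_i(z)·v_i(z) + u_m(z)·~v_m(z) is a constant M×M matrix: there exists C ∈ ℂ^{M×M} such that this Laurent matrix polynomial equals C·z^0, i.e., all of its coefficients at nonzero powers of z vanish. -/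
noncomputable section

/-- The type of `M × M` Laurent matrix polynomials over `ℂ`. -/
abbrev LMP (M : ℕ) := Matrix (Fin M) (Fin M) (LaurentPolynomial ℂ)

/-- The adjoint of a scalar Laurent polynomial: `~p(z) = Σ conj(A_n) z^{-n}`. -/
def lpAdj (p : LaurentPolynomial ℂ) : LaurentPolynomial ℂ :=
  AddMonoidAlgebra.ofCoeff
    (Finsupp.equivMapDomain (Equiv.neg ℤ) (Finsupp.mapRange (starRingEnd ℂ) (map_zero _) p.coeff))

/-- The adjoint of a Laurent matrix polynomial: `~P(z) = Σ A_nᴴ z^{-n}`. -/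
def adjM {n : Type*} (P : Matrix n n (LaurentPolynomial ℂ)) :
    Matrix n n (LaurentPolynomial ℂ) :=
  fun i j => lpAdj (P j i)

/-- The coefficient of `z^n` of a Laurent matrix polynomial, an `M × M` complex matrix. -/
def coeffM {M : ℕ} (P : LMP M) (n : ℤ) : Matrix (Fin M) (Fin M) ℂ :=
  fun i j => (P i j).coeff n

/-- `P^+(M)`: Laurent matrix polynomials with vanishing coefficients at negative powers. -/
def Pplus (M : ℕ) : Set (LMP M) := {P | ∀ n : ℤ, n < 0 → coeffM P n = 0}

/-- `P^-(M)`: Laurent matrix polynomials with vanishing coefficients at positive powers. -/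
def Pminus (M : ℕ) : Set (LMP M) := {P | ∀ n : ℤ, 0 < n → coeffM P n = 0}

/-- `P^+_N(M)`: coefficients vanish unless `0 ≤ n ≤ N`. -/
def PplusN (M N : ℕ) : Set (LMP M) := {P | ∀ n : ℤ, (n < 0 ∨ (N : ℤ) < n) → coeffM P n = 0}

/-- `P^-_N(M)`: coefficients vanish unless `-N ≤ n ≤ 0`. -/
def PminusN (M N : ℕ) : Set (LMP M) := {P | ∀ n : ℤ, (n < -(N : ℤ) ∨ 0 < n) → coeffM P n = 0}

/-- `(x_1, …, x_{m-1}, x_m)` is a solution of the system (2.2). -/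
def IsSolution (M N m : ℕ) (ζ : Fin (m - 1) → LMP M)
    (x : Fin (m - 1) → LMP M) (xm : LMP M) : Prop :=
  (∀ j, x j ∈ PplusN M N) ∧ xm ∈ PplusN M N ∧
    (∀ j, xm * ζ j - adjM (x j) ∈ Pplus M) ∧
    ((∑ j, ζ j * x j) + adjM xm ∈ Pplus M)

/-! Write `F = Σ ~uᵢ vᵢ + u_m ~v_m`. The equations of the system rearrange `F` as
`u_m (Σ ζⱼ vⱼ + ~v_m) - Σ (u_m ζⱼ - ~uⱼ) vⱼ`, a ring combination of elements of `P⁺`,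
so `F ∈ P⁺`. Exchanging the roles of `u` and `v` gives `~F ∈ P⁺`, so `F` has no positive
powers of `z` either. -/

open LaurentPolynomial
open scoped Matrix

namespace LaurentPolynomial

variable (R : Type*) [Ring R]

def nonnegSubring : Subring R[T;T⁻¹] where
  carrier := {p | ∀ n < 0, p.coeff n = 0}
  zero_mem' _ _ := rfl
  one_mem' n hn := by
    rw [← single_zero_one_eq_one, AddMonoidAlgebra.coeff_single, Finsupp.single_eq_of_ne hn.ne]
  add_mem' hp hq n hn := by
    rw [AddMonoidAlgebra.coeff_add, Finsupp.add_apply, hp n hn, hq n hn, add_zero]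
  neg_mem' hp n hn := by
    rw [AddMonoidAlgebra.coeff_neg, Finsupp.neg_apply, hp n hn, neg_zero]
  mul_mem' {p q} hp hq n hn := by
    classical
    by_contra hpq
    obtain ⟨a, ha, b, hb, rfl⟩ := Finset.mem_add.mp
      (AddMonoidAlgebra.support_coeff_mul_subset p q (Finsupp.mem_support_iff.mpr hpq))
    have ha : 0 ≤ a := not_lt.mp fun h => Finsupp.mem_support_iff.mp ha (hp a h)
    have hb : 0 ≤ b := not_lt.mp fun h => Finsupp.mem_support_iff.mp hb (hq b h)
    omega

variable {R}

lemma mem_nonnegSubring {p : R[T;T⁻¹]} : p ∈ nonnegSubring R ↔ ∀ n < 0, p.coeff n = 0 := .rfl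

lemma eq_C_coeff_zero {p : R[T;T⁻¹]} (h : ∀ n ≠ 0, p.coeff n = 0) : p = C (p.coeff 0) := by
  ext n
  rw [← single_eq_C, AddMonoidAlgebra.coeff_single, Finsupp.single_apply]
  split_ifs with hn
  · rw [hn]
  · exact h n (Ne.symm hn)

end LaurentPolynomial

lemma lpAdj_eq_invert_map (p : ℂ[T;T⁻¹]) :
    lpAdj p = invert (AddMonoidAlgebra.mapRingHom ℤ (starRingEnd ℂ) p) := by
  ext n
  simp [lpAdj]

instance : StarRing ℂ[T;T⁻¹] where
  star := lpAdj
  star_involutive p := by ext n; simp [lpAdj]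
  star_mul p q := by simp only [lpAdj_eq_invert_map, map_mul, mul_comm]
  star_add p q := by simp only [lpAdj_eq_invert_map, map_add]

lemma coeff_star (p : ℂ[T;T⁻¹]) (n : ℤ) : (star p).coeff n = star (p.coeff (-n)) :=
  starRingEnd_apply _

lemma adjM_eq_conjTranspose {n : Type*} (P : Matrix n n ℂ[T;T⁻¹]) : adjM P = Pᴴ := rfl

lemma mem_Pplus_iff {M : ℕ} {P : LMP M} : P ∈ Pplus M ↔ P ∈ (nonnegSubring ℂ).matrix :=
  ⟨fun h i j n hn => congr_fun₂ (h n hn) i j, fun h n hn => funext₂ fun i j => h i j n hn⟩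

lemma PplusN_subset_Pplus (M N : ℕ) : PplusN M N ⊆ Pplus M := fun _ hP n hn => hP n (.inl hn)

lemma IsSolution.mem_Pplus {M N m : ℕ} {ζ : Fin (m - 1) → LMP M} {u v : Fin (m - 1) → LMP M}
    {um vm : LMP M} (hu : IsSolution M N m ζ u um) (hv : IsSolution M N m ζ v vm) :
    (∑ i, adjM (u i) * v i) + um * adjM vm ∈ Pplus M := by
  obtain ⟨-, hum, hu_comp, -⟩ := hu
  obtain ⟨hv_comp, -, -, hv_last⟩ := hv
  have rearrange : (∑ i, adjM (u i) * v i) + um * adjM vm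
      = um * ((∑ j, ζ j * v j) + adjM vm) - ∑ j, (um * ζ j - adjM (u j)) * v j := by
    simp only [mul_add, Finset.mul_sum, sub_mul, Finset.sum_sub_distrib, mul_assoc]
    abel
  have of_PplusN {P : LMP M} (hP : P ∈ PplusN M N) :=
    mem_Pplus_iff.mp (PplusN_subset_Pplus M N hP)
  rw [rearrange, mem_Pplus_iff]
  exact sub_mem (mul_mem (of_PplusN hum) (mem_Pplus_iff.mp hv_last))
    (sum_mem fun j _ => mul_mem (mem_Pplus_iff.mp (hu_comp j)) (of_PplusN (hv_comp j)))

lemma eq_map_C_of_mem_Pplus {M : ℕ} {P : LMP M} (hP : P ∈ Pplus M) (hP' : adjM P ∈ Pplus M) :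
    P = (coeffM P 0).map C := by
  refine Matrix.ext fun i j => ?_
  refine eq_C_coeff_zero fun n hn => ?_
  rcases hn.lt_or_gt with hn | hn
  · exact congr_fun₂ (hP n hn) i j
  · simpa [coeffM, adjM_eq_conjTranspose, coeff_star] using congr_fun₂ (hP' (-n) (by omega)) j i

theorem lemma_sum_is_constant_general (M N m : ℕ)
    (ζ : Fin (m - 1) → LMP M)
    (u : Fin (m - 1) → LMP M) (um : LMP M)
    (v : Fin (m - 1) → LMP M) (vm : LMP M)
    (hu : IsSolution M N m ζ u um) (hv : IsSolution M N m ζ v vm) :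
    ∃ C : Matrix (Fin M) (Fin M) ℂ,
      (∑ i, adjM (u i) * v i) + um * adjM vm = C.map LaurentPolynomial.C := by
  have hadj : adjM ((∑ i, adjM (u i) * v i) + um * adjM vm)
      = (∑ i, adjM (v i) * u i) + vm * adjM um := by
    simp [adjM_eq_conjTranspose, Matrix.conjTranspose_sum]
  exact ⟨_, eq_map_C_of_mem_Pplus (hu.mem_Pplus hv) (hadj ▸ hv.mem_Pplus hu)⟩

/-- Lemma 1, equation (S5): for any two solutions `u`, `v` of the system,
`Σ_{i=1}^{m-1} ~u_i · v_i + u_m · ~v_m` is a constant `M × M` matrix. -/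
theorem lemma_sum_is_constant (M N m : ℕ) (hM : 0 < M) (hN : 0 < N) (hm : 2 ≤ m)
    (ζ : Fin (m - 1) → LMP M) (hζ : ∀ j, ζ j ∈ PminusN M N)
    (u : Fin (m - 1) → LMP M) (um : LMP M)
    (v : Fin (m - 1) → LMP M) (vm : LMP M)
    (hu : IsSolution M N m ζ u um) (hv : IsSolution M N m ζ v vm) :
    ∃ C : Matrix (Fin M) (Fin M) ℂ,
      (∑ i, adjM (u i) * v i) + um * adjM vm = C.map LaurentPolynomial.C :=
  lemma_sum_is_constant_general M N m ζ u um v vm hu hv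
end
end

section
/- Let M and N be positive integers, let ζ ∈ P^-_N(M), and let f ∈ P^+_N(M) with det C_0{f} ≠ 0, where C_0{f} ∈ ℂ^{M×M} is the coefficient of z^0 in f. Then there exist ζ^- ∈ P^-_N(M) and a matrix formal power series ζ^+(z) = Σ_{n≥0} B_n z^n with B_n ∈ ℂ^{M×M} such that ζ = f·(ζ^+ + ζ^-) holds as an identity of M×M matrices of formal Laurent series (i.e., in the ring of M×M matrices over the field of formal Laurent series ℂ((z)), with ζ, f, and ζ^- coerced into that ring). -/
noncomputable section

/-- Regard a Laurent polynomial as a formal Laurent series. -/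
def lpToLS (p : LaurentPolynomial ℂ) : LaurentSeries ℂ where
  coeff := fun n => p.coeff n
  isPWO_support' := by
    rw [Finsupp.fun_support_eq]
    exact p.coeff.support.finite_toSet.isPWO
/-!
Since `det C_0{f} ≠ 0`, the matrix `f` is invertible over `ℂ⟦z⟧`, so `H := f⁻¹ ζ` satisfies
`ζ = f H`. Power series have `z`-adic valuation at most `1` and the entries of `ζ` at most
`exp N`, so by the ultrametric inequality every entry of `H` has no coefficients below `z^{-N}`.
Splitting each entry of `H` into its part of degree in `[-N, 0)`, a Laurent polynomial, and the
rest, a power series, gives `ζ^-` and `ζ^+`.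
-/

open HahnSeries LaurentSeries WithZero

theorem Valuation.map_matrix_mul_apply_le {R Γ₀ n : Type*} [CommRing R]
    [LinearOrderedCommGroupWithZero Γ₀] [Fintype n] (v : Valuation R Γ₀) {A B : Matrix n n R}
    {γ : Γ₀} (hA : ∀ i j, v (A i j) ≤ 1) (hB : ∀ i j, v (B i j) ≤ γ) (i j : n) :
    v ((A * B) i j) ≤ γ := by
  rw [Matrix.mul_apply]
  refine v.map_sum_le fun k _ => ?_
  simpa [v.map_mul] using mul_le_mul' (hA i k) (hB k j)

theorem Matrix.isUnit_det_iff_isUnit_det_map_constantCoeff {R n : Type*} [CommRing R]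
    [Fintype n] [DecidableEq n] (A : Matrix n n (PowerSeries R)) :
    IsUnit A.det ↔ IsUnit (A.map PowerSeries.constantCoeff).det := by
  rw [PowerSeries.isUnit_iff_constantCoeff, RingHom.map_det, RingHom.mapMatrix_apply]

def LaurentSeries.truncIco {R : Type*} [Semiring R] (x : LaurentSeries R) (a b : ℤ) :
    LaurentPolynomial R :=
  AddMonoidAlgebra.ofCoeff (Finsupp.indicator (Finset.Ico a b) fun n _ => x.coeff n)

theorem LaurentSeries.coeff_truncIco {R : Type*} [Semiring R] (x : LaurentSeries R)
    (a b n : ℤ) : (x.truncIco a b).coeff n = if a ≤ n ∧ n < b then x.coeff n else 0 := by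
  classical
  simp [truncIco, AddMonoidAlgebra.coeff_ofCoeff, Finsupp.indicator_apply]

theorem lpToLS_eq_ofPowerSeries {p : LaurentPolynomial ℂ} (hp : ∀ n < 0, p.coeff n = 0) :
    lpToLS p = ofPowerSeries ℤ ℂ (PowerSeries.mk fun n => p.coeff n) := by
  ext n
  rw [PowerSeries.coeff_coe]
  split_ifs with hn
  · exact hp n hn
  · simp [lpToLS, show ((n.natAbs : ℕ) : ℤ) = n by omega]

theorem valuation_lpToLS_le {p : LaurentPolynomial ℂ} {N : ℤ} (hp : ∀ n < -N, p.coeff n = 0) :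
    Valued.v (lpToLS p) ≤ exp N := by
  simpa using (valuation_le_iff_coeff_lt_eq_zero ℂ (D := -N)).mpr hp

theorem exists_eq_ofPowerSeries_add_lpToLS_truncIco {x : LaurentSeries ℂ} {N : ℤ}
    (hx : Valued.v x ≤ exp N) :
    ∃ p : PowerSeries ℂ, x = ofPowerSeries ℤ ℂ p + lpToLS (x.truncIco (-N) 0) := by
  have hcoeff : ∀ n < 0, (x - lpToLS (x.truncIco (-N) 0)).coeff n = 0 := by
    intro n hn
    have hxn := (valuation_le_iff_coeff_lt_eq_zero ℂ (D := -N)).mp (by simpa using hx) n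
    simp only [HahnSeries.coeff_sub, lpToLS, coeff_truncIco]
    split_ifs with h
    · exact sub_self _
    · rw [hxn (by omega), sub_zero]
  obtain ⟨p, hp⟩ := (val_le_one_iff_eq_coe ℂ _).mp
    ((valuation_le_iff_coeff_lt_eq_zero ℂ (D := 0)).mpr hcoeff |>.trans_eq (by simp))
  exact ⟨p, by rw [hp, sub_add_cancel]⟩

theorem zeta_decomposition_general (M N : ℕ)
    (ζ : LMP M) (hζ : ζ ∈ PminusN M N)
    (f : LMP M) (hf : f ∈ PplusN M N) (hdet : (coeffM f 0).det ≠ 0) :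
    ∃ ζm ∈ PminusN M N, ∃ ζp : Matrix (Fin M) (Fin M) (PowerSeries ℂ),
      ζ.map lpToLS =
        f.map lpToLS * (ζp.map (HahnSeries.ofPowerSeries ℤ ℂ) + ζm.map lpToLS) := by
  set F : Matrix (Fin M) (Fin M) (PowerSeries ℂ) := f.map fun p => PowerSeries.mk (p.coeff ·)
  have hfF : f.map lpToLS = F.map (ofPowerSeries ℤ ℂ) := by
    ext1 i j
    exact lpToLS_eq_ofPowerSeries fun n hn => congrFun₂ (hf n (.inl hn)) i j
  have hF : IsUnit F.det := by
    have hF0 : F.map PowerSeries.constantCoeff = coeffM f 0 := by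
      ext i j
      simp [F, coeffM]
    rw [Matrix.isUnit_det_iff_isUnit_det_map_constantCoeff, hF0]
    exact hdet.isUnit
  set H := (F⁻¹).map (ofPowerSeries ℤ ℂ) * ζ.map lpToLS
  have hH : ∀ i j, Valued.v (H i j) ≤ exp (N : ℤ) :=
    Valued.v.map_matrix_mul_apply_le (fun _ _ => (val_le_one_iff_eq_coe ℂ _).mpr ⟨_, rfl⟩)
      fun k j => valuation_lpToLS_le fun n hn => congrFun₂ (hζ n (.inl hn)) k j
  choose ζp hζp using fun i j => exists_eq_ofPowerSeries_add_lpToLS_truncIco (hH i j)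
  refine ⟨H.map (truncIco · (-N) 0), fun n hn => ?_, Matrix.of ζp, ?_⟩
  · ext i j
    simp only [coeffM, Matrix.map_apply, coeff_truncIco]
    rw [if_neg (by omega)]
    rfl
  · have hsplit :
        (Matrix.of ζp).map (ofPowerSeries ℤ ℂ) + (H.map (truncIco · (-N) 0)).map lpToLS = H := by
      ext1 i j
      exact (hζp i j).symm
    rw [hsplit, hfF, ← Matrix.mul_assoc, ← Matrix.map_mul, Matrix.mul_nonsing_inv _ hF,
      Matrix.map_one _ (map_zero _) (map_one _), Matrix.one_mul]

/-- if `ζ ∈ P^-_N(M)` and `f ∈ P^+_N(M)` with `det C_0{f} ≠ 0`, then there are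
`ζ^- ∈ P^-_N(M)` and a matrix formal power series `ζ^+` with `ζ = f · (ζ^+ + ζ^-)` in the
ring of `M × M` matrices over the formal Laurent series `ℂ((z))`. -/
theorem zeta_decomposition (M N : ℕ) (hM : 0 < M) (hN : 0 < N)
    (ζ : LMP M) (hζ : ζ ∈ PminusN M N)
    (f : LMP M) (hf : f ∈ PplusN M N) (hdet : (coeffM f 0).det ≠ 0) :
    ∃ ζm ∈ PminusN M N, ∃ ζp : Matrix (Fin M) (Fin M) (PowerSeries ℂ),
      ζ.map lpToLS =
        f.map lpToLS * (ζp.map (HahnSeries.ofPowerSeries ℤ ℂ) + ζm.map lpToLS) :=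
  zeta_decomposition_general M N ζ hζ f hf hdet
end
end
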